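/- arXiv:1809.01777 — 6 statements merged into one kernel-verified Lean document; each statement's English description precedes it below -/
import Mathlib

section
/- Let G be a group and let H, G₁, G₂ be subgroups of G such that G₁ and G₂ are contained in the normalizer of H. If the pointwise product set G₁·G₂ meets H only in the identity element and G₁ ⊓ G₂ is trivial, then the subgroup joins satisfy (H ⊔ G₁) ⊓ (H ⊔ G₂) = H. -/
open scoped Pointwise

namespace Subgroup

variable {G : Type*} [Group G]

theorem mul_inter_mul_subset {H K L : Subgroup G}
    (hKLH : (K : Set G) * L ∩ H ⊆ {1}) (hKL : K ⊓ L = ⊥) :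
    (H : Set G) * K ∩ (H * L) ⊆ H := by
  rintro _ ⟨⟨h, hh, k, hk, rfl⟩, ⟨h', hh', l, hl, hx⟩⟩
  have hkl : k * l⁻¹ = h⁻¹ * h' := by
    rw [eq_inv_mul_iff_mul_eq, ← mul_assoc, mul_inv_eq_iff_eq_mul]
    exact hx.symm
  have hkl_one : k * l⁻¹ = 1 :=
    hKLH ⟨Set.mul_mem_mul hk (inv_mem hl), hkl ▸ mul_mem (inv_mem hh) hh'⟩
  obtain rfl : k = l := mul_inv_eq_one.mp hkl_one
  obtain rfl : k = 1 := mem_bot.mp (hKL ▸ mem_inf.mpr ⟨hk, hl⟩)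
  simpa using hh

end Subgroup

/-- If `G₁, G₂` normalize `H`, the product set `G₁ * G₂` meets `H` only in the identity,
and `G₁ ⊓ G₂` is trivial, then `(H ⊔ G₁) ⊓ (H ⊔ G₂) = H` as subgroups. -/
theorem stmt_1 {G : Type*} [Group G] (H G₁ G₂ : Subgroup G)
    (hn1 : G₁ ≤ Subgroup.normalizer (H : Set G)) (hn2 : G₂ ≤ Subgroup.normalizer (H : Set G))
    (h1 : ((G₁ : Set G) * (G₂ : Set G)) ∩ (H : Set G) = {1})
    (h2 : G₁ ⊓ G₂ = ⊥) :
    (H ⊔ G₁) ⊓ (H ⊔ G₂) = H := by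
  refine le_antisymm (fun x hx => ?_) (le_inf le_sup_left le_sup_left)
  rw [← SetLike.mem_coe, Subgroup.coe_inf, Subgroup.coe_mul_of_right_le_normalizer_left _ _ hn1,
    Subgroup.coe_mul_of_right_le_normalizer_left _ _ hn2] at hx
  exact Subgroup.mul_inter_mul_subset h1.le h2 hx
end

section
/- Let G be a group acting on a type X, let H, G₁, G₂ be finite subgroups of G with H ≤ G₁, H ≤ G₂, H normal in G₁ and H normal in G₂, and let P₁, P₂ ∈ X. Let π : X → X/H be the canonical map onto the quotient of X by the orbit equivalence relation of the H-action. Then the identity ∑_{h ∈ H} single(h • P₁) + ∑_{σ ∈ G₁} single(σ • P₂) = ∑_{h ∈ H} single(h • P₂) + ∑_{τ ∈ G₂} single(τ • P₁) holds in the free abelian group on X if and only if the identity single(π(P₁)) + ∑_{c ∈ G₁/H} single(π(ĉ • P₂)) = single(π(P₂)) + ∑_{c ∈ G₂/H} single(π(ĉ • P₁)) holds in the free abelian group on X/H, where ĉ denotes a representative in Gᵢ of the coset c (the summands being independent of this choice). -/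
/-!
Pull divisors on `X/H` back to `X` by sending the class of `Q` to the orbit sum
`∑_{h ∈ H} single (h • Q)`. Since `H` is normal in `Gᵢ`, each `Gᵢ` is the disjoint union of the
cosets `H ĉ`, so `∑_{σ ∈ Gᵢ} single (σ • P)` is the pullback of `∑_{c ∈ Gᵢ/H} single (π (ĉ • P))`.
Thus the identity on `X` is the pullback of the identity on `X/H`, and pullback is injective: pushing forward along `π` again multiplies by `|H|`.
-/

open scoped Classical

theorem QuotientGroup.bijective_mul_out {K : Type*} [Group K] [Finite K] (N : Subgroup K) [N.Normal] :
    Function.Bijective fun p : N × (K ⧸ N) => (p.1 : K) * p.2.out := by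
  have mk_mul_out (n : N) (c : K ⧸ N) : ((n * c.out : K) : K ⧸ N) = c := by
    rw [QuotientGroup.mk_mul, (QuotientGroup.eq_one_iff _).mpr n.2, one_mul, QuotientGroup.out_eq']
  refine (Nat.bijective_iff_injective_and_card _).mpr ⟨?_, ?_⟩
  · rintro ⟨n, c⟩ ⟨n', c'⟩ h
    obtain rfl : c = c' := by rw [← mk_mul_out n c, ← mk_mul_out n' c']; exact congrArg _ h
    exact Prod.ext (Subtype.ext (mul_right_cancel h)) rfl
  · rw [Nat.card_prod, mul_comm, ← Subgroup.card_eq_card_quotient_mul_card_subgroup]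

theorem QuotientGroup.sum_eq_sum_sum_mul_out {K M : Type*} [Group K] [Fintype K] [AddCommMonoid M]
    (N : Subgroup K) [N.Normal] [Fintype N] [Fintype (K ⧸ N)] (f : K → M) :
    ∑ σ, f σ = ∑ c : K ⧸ N, ∑ n : N, f (n * c.out) := by
  rw [Finset.sum_comm, ← Fintype.sum_prod_type']
  exact (Fintype.sum_bijective _ (QuotientGroup.bijective_mul_out N) _ _ fun _ => rfl).symm

namespace MulAction

variable {Γ X : Type*} [Group Γ] [MulAction Γ X] [Fintype Γ]

variable (Γ) in
noncomputable def orbitSum (Q : X) : X →₀ ℤ :=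
  ∑ g : Γ, Finsupp.single (g • Q) 1

theorem orbitSum_smul (g : Γ) (Q : X) : orbitSum Γ (g • Q) = orbitSum Γ Q :=
  Fintype.sum_equiv (Equiv.mulRight g) _ _ fun h => by simp [mul_smul]

variable (Γ X) in
noncomputable def orbitPullback : (Quotient (orbitRel Γ X) →₀ ℤ) →+ (X →₀ ℤ) :=
  (Finsupp.linearCombination ℤ (Quotient.lift (orbitSum Γ) fun _ Q h => by
    obtain ⟨g, rfl⟩ := orbitRel_apply.mp h; exact orbitSum_smul g Q)).toAddMonoidHom

theorem orbitPullback_single_mk (Q : X) (n : ℤ) :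
    orbitPullback Γ X (Finsupp.single (Quotient.mk _ Q) n) = n • orbitSum Γ Q := by
  simp [orbitPullback]

theorem mapDomain_orbitSum (Q : X) :
    Finsupp.mapDomain (Quotient.mk (orbitRel Γ X)) (orbitSum Γ Q) =
      Fintype.card Γ • Finsupp.single (Quotient.mk _ Q) 1 := by
  have (g : Γ) : (Quotient.mk (orbitRel Γ X) (g • Q)) = Quotient.mk _ Q := Quotient.sound ⟨g, rfl⟩
  simp [orbitSum, Finsupp.mapDomain_finsetSum, this]

theorem mapDomain_orbitPullback (D : Quotient (orbitRel Γ X) →₀ ℤ) :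
    Finsupp.mapDomain (Quotient.mk _) (orbitPullback Γ X D) = Fintype.card Γ • D := by
  induction D using Finsupp.induction_linear with
  | zero => simp
  | add D D' hD hD' => rw [map_add, Finsupp.mapDomain_add, hD, hD', smul_add]
  | single q n =>
    induction q using Quotient.inductionOn with
    | h Q =>
      rw [orbitPullback_single_mk, Finsupp.mapDomain_smul, mapDomain_orbitSum, smul_comm,
        Finsupp.smul_single_one]

theorem orbitPullback_injective : Function.Injective (orbitPullback Γ X) := fun D D' h =>
  nsmul_right_injective (Fintype.card_ne_zero (α := Γ)) <| by
    simpa only [mapDomain_orbitPullback] using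
      congrArg (Finsupp.mapDomain (Quotient.mk (orbitRel Γ X))) h

end MulAction

open MulAction in
theorem Subgroup.sum_single_smul_eq_orbitPullback {G X : Type*} [Group G] [MulAction G X]
    {H K : Subgroup G} [Fintype H] [Fintype K] (hHK : H ≤ K) [(H.subgroupOf K).Normal] (P : X) :
    ∑ σ : K, Finsupp.single ((σ : G) • P) (1 : ℤ) =
      orbitPullback H X (∑ c : K ⧸ H.subgroupOf K,
        Finsupp.single (Quotient.mk (orbitRel H X) ((c.out : G) • P)) 1) := by
  rw [QuotientGroup.sum_eq_sum_sum_mul_out (H.subgroupOf K), map_sum]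
  refine Fintype.sum_congr _ _ fun c => ?_
  rw [orbitPullback_single_mk, one_smul]
  exact Fintype.sum_equiv (Subgroup.subgroupOfEquivOfLe hHK).toEquiv _ _ fun n => by
    simp [mul_smul, Subgroup.smul_def]

open MulAction in
/-- Divisor identity upstairs iff its pushed-forward identity downstairs: for finite
subgroups `H ≤ G₁`, `H ≤ G₂` with `H` normal in both, the identity
`∑_{h ∈ H} single (h • P₁) + ∑_{σ ∈ G₁} single (σ • P₂)
  = ∑_{h ∈ H} single (h • P₂) + ∑_{τ ∈ G₂} single (τ • P₁)`
holds on `X` iff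
`single (π P₁) + ∑_{c ∈ G₁/H} single (π (ĉ • P₂))
  = single (π P₂) + ∑_{c ∈ G₂/H} single (π (ĉ • P₁))`
holds on `X/H`, where `ĉ` is a coset representative. -/
theorem stmt_7 {G X : Type*} [Group G] [MulAction G X]
    (H G₁ G₂ : Subgroup G) [Fintype H] [Fintype G₁] [Fintype G₂]
    (h1 : H ≤ G₁) (h2 : H ≤ G₂)
    [(H.subgroupOf G₁).Normal] [(H.subgroupOf G₂).Normal]
    (P₁ P₂ : X) :
    (∑ h : H, Finsupp.single ((h : G) • P₁) (1 : ℤ) +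
        ∑ σ : G₁, Finsupp.single ((σ : G) • P₂) (1 : ℤ) =
      ∑ h : H, Finsupp.single ((h : G) • P₂) (1 : ℤ) +
        ∑ τ : G₂, Finsupp.single ((τ : G) • P₁) (1 : ℤ)) ↔
    (Finsupp.single (Quotient.mk (MulAction.orbitRel H X) P₁) (1 : ℤ) +
        ∑ c : G₁ ⧸ H.subgroupOf G₁,
          Finsupp.single (Quotient.mk (MulAction.orbitRel H X) ((c.out : G) • P₂)) (1 : ℤ) =
      Finsupp.single (Quotient.mk (MulAction.orbitRel H X) P₂) (1 : ℤ) +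
        ∑ c : G₂ ⧸ H.subgroupOf G₂,
          Finsupp.single (Quotient.mk (MulAction.orbitRel H X) ((c.out : G) • P₁)) (1 : ℤ)) := by
  have orbit_eq (P : X) : ∑ h : H, Finsupp.single ((h : G) • P) (1 : ℤ) =
      orbitPullback H X (Finsupp.single (Quotient.mk _ P) 1) := by
    rw [orbitPullback_single_mk, one_smul]; rfl
  rw [orbit_eq, orbit_eq, Subgroup.sum_single_smul_eq_orbitPullback h1,
    Subgroup.sum_single_smul_eq_orbitPullback h2, ← map_add, ← map_add]
  exact orbitPullback_injective.eq_iff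
end

section
/- Let K be a field of characteristic p > 0 and let q be a power of p. Suppose x, y, z ∈ K satisfy x^q + x = y^{q+1} and y((x^q + x)^{q−1} − 1) = z^{q²−q+1}, and suppose x ≠ 0. Then the triple (x', y', z') = (1/x, −y/x, z/x) also satisfies x'^q + x' = y'^{q+1} and y'((x'^q + x')^{q−1} − 1) = z'^{q²−q+1}. -/
/-!
Dividing `x ^ q + x = y ^ (q + 1)` by `x ^ (q + 1)` gives the first equation at `(1 / x, -y / x, z / x)`,
since `(-1) ^ (q + 1) = 1` in characteristic `p`. For the second, write `u = x ^ q + x = x (x ^ (q - 1) + 1)`;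
additivity of `t ↦ t ^ q` gives `u ^ (q - 1) (x ^ (q - 1) + 1) = x ^ (q - 1) (x ^ (q (q - 1)) + 1)`, and after
clearing denominators this is exactly what remains once `z ^ (q² - q + 1)` is replaced by `y (u ^ (q - 1) - 1)`.
-/

def IsGKPoint {K : Type*} [Field K] (q : ℕ) (x y z : K) : Prop :=
  x ^ q + x = y ^ (q + 1) ∧ y * ((x ^ q + x) ^ (q - 1) - 1) = z ^ (q ^ 2 - q + 1)

section ExpChar

variable {R : Type*} (p : ℕ) {n q : ℕ}

lemma neg_pow_expChar_pow_add_one [CommRing R] [ExpChar R p] (hq : q = p ^ n) (a : R) :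
    (-a) ^ (q + 1) = a ^ (q + 1) := by
  rw [hq, neg_pow, pow_succ (-1 : R), neg_one_pow_expChar_pow]
  ring

lemma pow_add_self_pow_pred_mul [CommSemiring R] [ExpChar R p] (hq : q = p ^ n) (x : R) :
    (x ^ q + x) ^ (q - 1) * (x ^ (q - 1) + 1) = x ^ (q ^ 2 - 1) + x ^ (q - 1) := by
  have hfrob : (x ^ (q - 1) + 1) ^ q = x ^ ((q - 1) * q) + 1 := by
    rw [pow_mul, hq, add_pow_expChar_pow, one_pow]
  obtain ⟨r, rfl⟩ : ∃ r, q = r + 1 := Nat.exists_eq_add_one.mpr (hq ▸ expChar_pow_pos R p n)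
  simp only [Nat.add_sub_cancel] at hfrob ⊢
  calc (x ^ (r + 1) + x) ^ r * (x ^ r + 1) = x ^ r * (x ^ r + 1) ^ (r + 1) := by
        rw [show x ^ (r + 1) + x = x * (x ^ r + 1) by ring, mul_pow]; ring
    _ = x ^ ((r + 1) ^ 2 - 1) + x ^ r := by
      rw [hfrob, show (r + 1) ^ 2 - 1 = r + r * (r + 1) by ring_nf; omega]; ring

end ExpChar

lemma one_div_pow_add_one_div {K : Type*} [Field K] (q : ℕ) {x : K} (hx : x ≠ 0) :
    (1 / x) ^ q + 1 / x = (x ^ q + x) / x ^ (q + 1) := by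
  rw [div_pow, one_pow]
  field_simp
  ring

theorem IsGKPoint.one_div {K : Type*} [Field K] (p : ℕ) [ExpChar K p] {n q : ℕ} (hq : q = p ^ n)
    {x y z : K} (hP : IsGKPoint q x y z) (hx : x ≠ 0) :
    IsGKPoint q (1 / x) (-y / x) (z / x) := by
  obtain ⟨h1, h2⟩ := hP
  constructor
  · rw [one_div_pow_add_one_div q hx, h1, neg_div, neg_pow_expChar_pow_add_one p hq, div_pow]
  have key := pow_add_self_pow_pred_mul p hq x
  rw [one_div_pow_add_one_div q hx, div_pow z, ← h2, neg_div]
  obtain ⟨r, rfl⟩ : ∃ r, q = r + 1 := Nat.exists_eq_add_one.mpr (hq ▸ expChar_pow_pos K p n)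
  simp only [Nat.add_sub_cancel, show (r + 1) ^ 2 - (r + 1) + 1 = r ^ 2 + r + 1 by ring_nf; omega,
    show (r + 1) ^ 2 - 1 = r ^ 2 + 2 * r by ring_nf; omega] at key ⊢
  rw [div_pow, ← pow_mul]
  generalize x ^ (r + 1) + x = u at key ⊢
  field_simp
  linear_combination (-(y * x ^ (r ^ 2 + r + 1))) * key

theorem stmt_9_general {K : Type*} [Field K] (p n q : ℕ) (hp : p.Prime) [CharP K p]
    (hq : q = p ^ n) (x y z : K)
    (h1 : x ^ q + x = y ^ (q + 1))
    (h2 : y * ((x ^ q + x) ^ (q - 1) - 1) = z ^ (q ^ 2 - q + 1))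
    (hx : x ≠ 0) :
    (1 / x) ^ q + 1 / x = (-y / x) ^ (q + 1) ∧
      (-y / x) * (((1 / x) ^ q + 1 / x) ^ (q - 1) - 1) = (z / x) ^ (q ^ 2 - q + 1) := by
  have : ExpChar K p := ExpChar.prime hp
  exact IsGKPoint.one_div p hq ⟨h1, h2⟩ hx

/-- The map `ξ(x, y, z) = (1/x, -y/x, z/x)` preserves the affine
Giulietti–Korchmáros curve `x^q + x = y^{q+1}`, `y((x^q+x)^{q-1} - 1) = z^{q²-q+1}`. -/
theorem stmt_9 {K : Type*} [Field K] (p n q : ℕ) (hp : p.Prime) [CharP K p]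
    (hn : 0 < n) (hq : q = p ^ n) (x y z : K)
    (h1 : x ^ q + x = y ^ (q + 1))
    (h2 : y * ((x ^ q + x) ^ (q - 1) - 1) = z ^ (q ^ 2 - q + 1))
    (hx : x ≠ 0) :
    (1 / x) ^ q + 1 / x = (-y / x) ^ (q + 1) ∧
      (-y / x) * (((1 / x) ^ q + 1 / x) ^ (q - 1) - 1) = (z / x) ^ (q ^ 2 - q + 1) :=
  stmt_9_general p n q hp hq x y z h1 h2 hx
end

section
/- Let K be a field of characteristic p > 0 and let q be a power of p. Suppose x, y, z ∈ K satisfy x^q + x = y^{q+1} and y((x^q + x)^{q−1} − 1) = z^{q²−q+1}. Then z = 0 if and only if x^{q²} = x and y^{q²} = y. (In particular, the affine points of the Giulietti–Korchmáros curve lying on the plane z = 0 are exactly its affine points rational over the field with q² elements.) -/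
/-!
Put `s = x^q + x = y^{q+1}`. Since `y^{(q+1)(q-1)+1} = y^{q²}`, the left side of the second equation
is `y · (s^{q-1} - 1) = y^{q²} - y`, so `z = 0` exactly when `y^{q²} = y`. In that case
`s^q = y^{q²} y^q = y^{q+1} = s`, and by additivity of Frobenius `s^q - s = x^{q²} - x`,
so `x^{q²} = x` follows.
-/

lemma mul_pow_succ_pow_pred_sub_one {R : Type*} [CommRing R] (y : R) {q : ℕ} (hq : 1 ≤ q) :
    y * ((y ^ (q + 1)) ^ (q - 1) - 1) = y ^ q ^ 2 - y := by
  obtain ⟨m, rfl⟩ := Nat.exists_eq_add_of_le' hq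
  rw [mul_sub, mul_one, ← pow_mul, ← pow_succ']
  congr 2
  simp only [Nat.add_sub_cancel]
  ring

lemma pow_eq_self_of_eq_pow_succ {M : Type*} [Monoid M] {s y : M} {q : ℕ}
    (hs : s = y ^ (q + 1)) (hy : y ^ q ^ 2 = y) : s ^ q = s :=
  calc s ^ q = y ^ q ^ 2 * y ^ q := by rw [hs, ← pow_mul, ← pow_add]; ring_nf
    _ = s := by rw [hy, hs, pow_succ']

lemma add_pow_expChar_pow_add_self {R : Type*} [CommRing R] {p : ℕ} [ExpChar R p] (x : R)
    (n : ℕ) : (x ^ p ^ n + x) ^ p ^ n = x ^ (p ^ n) ^ 2 + x ^ p ^ n := by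
  rw [add_pow_expChar_pow, ← pow_mul, sq]

theorem stmt_10_general {K : Type*} [Field K] (p n q : ℕ) (hp : p.Prime) [CharP K p]
    (hq : q = p ^ n) (x y z : K)
    (h1 : x ^ q + x = y ^ (q + 1))
    (h2 : y * ((x ^ q + x) ^ (q - 1) - 1) = z ^ (q ^ 2 - q + 1)) :
    z = 0 ↔ x ^ (q ^ 2) = x ∧ y ^ (q ^ 2) = y := by
  have : ExpChar K p := ExpChar.prime hp
  have hq1 : 1 ≤ q := hq ▸ Nat.one_le_pow _ _ hp.pos
  rw [← pow_eq_zero_iff (n := q ^ 2 - q + 1) (by omega), ← h2, h1,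
    mul_pow_succ_pow_pred_sub_one y hq1, sub_eq_zero]
  refine ⟨fun hy => ⟨?_, hy⟩, And.right⟩
  have hs := pow_eq_self_of_eq_pow_succ h1 hy
  rw [hq, add_pow_expChar_pow_add_self] at hs
  rw [hq]
  exact add_right_cancel (hs.trans (add_comm _ _))

/-- On the affine Giulietti–Korchmáros curve, `z = 0` iff `(x, y)` is rational over the
field with `q²` elements, i.e. `x^{q²} = x` and `y^{q²} = y`. -/
theorem stmt_10 {K : Type*} [Field K] (p n q : ℕ) (hp : p.Prime) [CharP K p]
    (hn : 0 < n) (hq : q = p ^ n) (x y z : K)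
    (h1 : x ^ q + x = y ^ (q + 1))
    (h2 : y * ((x ^ q + x) ^ (q - 1) - 1) = z ^ (q ^ 2 - q + 1)) :
    z = 0 ↔ x ^ (q ^ 2) = x ∧ y ^ (q ^ 2) = y :=
  stmt_10_general p n q hp hq x y z h1 h2
end

section
/- Let K be a field of characteristic 2, let q₀ = 2^n with n ≥ 1, and let q = 2q₀². Suppose x, y, z ∈ K satisfy y^q + y = x^{q₀}(x^q + x) and x^q + x = z^{q−2q₀+1}. Set α = y^{2q₀} + x^{2q₀+1} and β = x·y^{2q₀} + α^{2q₀}, and suppose β ≠ 0. Then the triple (x', y', z') = (α/β, y/β, z/β) also satisfies y'^q + y' = x'^{q₀}(x'^q + x') and x'^q + x' = z'^{q−2q₀+1}. (That is, the map ξ preserves the affine part of Skabelund's cyclic cover of the Suzuki curve.) -/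
/-!
Write `S = x^q + x`. Since `t ↦ t^{q₀}` is additive in characteristic 2, the curve equations
give `α^{q₀} = y + x^{q₀+1}`, `β = y² + xα` and `β^{q₀} = α + x^{q₀}y`, and from these
`α^q = α + x^{2q₀}S`, `β^q = β + Sy^{2q₀}`. Hence `α^qβ + αβ^q = Sβ^{2q₀}` and
`y^qβ + yβ^q = Sα^{q₀}β^{q₀}`, and dividing by `β^{q+1}` turns these into the two curve
equations for `(α/β, y/β, z/β)`, using `S = z^{q-2q₀+1}`.
-/

theorem div_pow_add_div {K : Type*} [Field K] (m : ℕ) (a : K) {b : K} (hb : b ≠ 0) :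
    (a / b) ^ m + a / b = (a ^ m * b + a * b ^ m) / b ^ (m + 1) := by
  rw [div_pow, div_add_div _ _ (pow_ne_zero m hb) hb, pow_succ, mul_comm (b ^ m) a]

namespace Skabelund

variable {R : Type*} [CommRing R] [CharP R 2] {n q₀ q : ℕ} {x y : R}

theorem add_pow_of_eq_two_pow (hq₀ : q₀ = 2 ^ n) (a b : R) :
    (a + b) ^ q₀ = a ^ q₀ + b ^ q₀ := by
  subst hq₀
  exact add_pow_char_pow a b 2 n

variable (q₀) in
def alpha (x y : R) : R := y ^ (2 * q₀) + x ^ (2 * q₀ + 1)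

variable (q₀) in
def beta (x y : R) : R := x * y ^ (2 * q₀) + alpha q₀ x y ^ (2 * q₀)

theorem alpha_pow_q₀ (hq₀ : q₀ = 2 ^ n) (hq : q = 2 * q₀ ^ 2)
    (h : y ^ q + y = x ^ q₀ * (x ^ q + x)) :
    alpha q₀ x y ^ q₀ = y + x ^ (q₀ + 1) := by
  have htwo : (2 : R) = 0 := CharTwo.two_eq_zero
  subst hq
  rw [alpha, add_pow_of_eq_two_pow hq₀]
  linear_combination h + (x ^ (2 * q₀ ^ 2 + q₀) - y) * htwo

theorem beta_eq (hq₀ : q₀ = 2 ^ n) (hq : q = 2 * q₀ ^ 2)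
    (h : y ^ q + y = x ^ q₀ * (x ^ q + x)) :
    beta q₀ x y = y ^ 2 + x * alpha q₀ x y := by
  rw [beta, pow_mul' (alpha q₀ x y) 2 q₀, alpha_pow_q₀ hq₀ hq h, CharTwo.add_sq, alpha]
  ring

theorem beta_pow_q₀ (hq₀ : q₀ = 2 ^ n) (hq : q = 2 * q₀ ^ 2)
    (h : y ^ q + y = x ^ q₀ * (x ^ q + x)) :
    beta q₀ x y ^ q₀ = alpha q₀ x y + x ^ q₀ * y := by
  rw [beta_eq hq₀ hq h, add_pow_of_eq_two_pow hq₀, mul_pow, alpha_pow_q₀ hq₀ hq h, alpha]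
  ring

theorem alpha_pow_q (hq₀ : q₀ = 2 ^ n) (hq : q = 2 * q₀ ^ 2)
    (h : y ^ q + y = x ^ q₀ * (x ^ q + x)) :
    alpha q₀ x y ^ q = alpha q₀ x y + x ^ (2 * q₀) * (x ^ q + x) := by
  have htwo : (2 : R) = 0 := CharTwo.two_eq_zero
  have hq' : q = q₀ * q₀ * 2 := by rw [hq]; ring
  rw [hq', pow_mul, pow_mul, alpha_pow_q₀ hq₀ hq h, add_pow_of_eq_two_pow hq₀, CharTwo.add_sq,
    alpha]
  linear_combination -x ^ (2 * q₀ + 1) * htwo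

theorem beta_pow_q (hq₀ : q₀ = 2 ^ n) (hq : q = 2 * q₀ ^ 2)
    (h : y ^ q + y = x ^ q₀ * (x ^ q + x)) :
    beta q₀ x y ^ q = beta q₀ x y + (x ^ q + x) * y ^ (2 * q₀) := by
  have htwo : (2 : R) = 0 := CharTwo.two_eq_zero
  have hq' : q = q₀ * q₀ * 2 := by rw [hq]; ring
  have hβ : beta q₀ x y = x * y ^ (2 * q₀) + alpha q₀ x y ^ (2 * q₀) := rfl
  rw [hq', pow_mul, pow_mul, beta_pow_q₀ hq₀ hq h, add_pow_of_eq_two_pow hq₀, CharTwo.add_sq]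
  linear_combination -hβ - x * y ^ (2 * q₀) * htwo

theorem alpha_pow_q_mul_beta_add (hq₀ : q₀ = 2 ^ n) (hq : q = 2 * q₀ ^ 2)
    (h : y ^ q + y = x ^ q₀ * (x ^ q + x)) :
    alpha q₀ x y ^ q * beta q₀ x y + alpha q₀ x y * beta q₀ x y ^ q
      = (x ^ q + x) * beta q₀ x y ^ (2 * q₀) := by
  have htwo : (2 : R) = 0 := CharTwo.two_eq_zero
  have hα : alpha q₀ x y = y ^ (2 * q₀) + x ^ (2 * q₀ + 1) := rfl
  rw [alpha_pow_q hq₀ hq h, beta_pow_q hq₀ hq h, pow_mul' (beta q₀ x y) 2 q₀,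
    beta_pow_q₀ hq₀ hq h]
  linear_combination (x ^ q + x) * x ^ (2 * q₀) * beta_eq hq₀ hq h
    - (x ^ q + x) * alpha q₀ x y * hα
    + alpha q₀ x y * (beta q₀ x y - (x ^ q + x) * x ^ q₀ * y) * htwo

theorem pow_q_mul_beta_add (hq₀ : q₀ = 2 ^ n) (hq : q = 2 * q₀ ^ 2)
    (h : y ^ q + y = x ^ q₀ * (x ^ q + x)) :
    y ^ q * beta q₀ x y + y * beta q₀ x y ^ q
      = (x ^ q + x) * (alpha q₀ x y ^ q₀ * beta q₀ x y ^ q₀) := by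
  have htwo : (2 : R) = 0 := CharTwo.two_eq_zero
  have hα : alpha q₀ x y = y ^ (2 * q₀) + x ^ (2 * q₀ + 1) := rfl
  rw [beta_pow_q hq₀ hq h, alpha_pow_q₀ hq₀ hq h, beta_pow_q₀ hq₀ hq h]
  linear_combination beta q₀ x y * h + (x ^ q + x) * x ^ q₀ * beta_eq hq₀ hq h
    - (x ^ q + x) * y * hα - (x ^ q + x) * y * x ^ (2 * q₀ + 1) * htwo

end Skabelund

open Skabelund in
theorem stmt_12_general {K : Type*} [Field K] [CharP K 2] (n q₀ q : ℕ)
    (hq₀ : q₀ = 2 ^ n) (hq : q = 2 * q₀ ^ 2) (x y z : K)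
    (h1 : y ^ q + y = x ^ q₀ * (x ^ q + x))
    (h2 : x ^ q + x = z ^ (q - 2 * q₀ + 1))
    (α β : K)
    (hα : α = y ^ (2 * q₀) + x ^ (2 * q₀ + 1))
    (hβ : β = x * y ^ (2 * q₀) + α ^ (2 * q₀))
    (hβ0 : β ≠ 0) :
    (y / β) ^ q + y / β = (α / β) ^ q₀ * ((α / β) ^ q + α / β) ∧
      (α / β) ^ q + α / β = (z / β) ^ (q - 2 * q₀ + 1) := by
  obtain rfl : α = alpha q₀ x y := hα
  obtain rfl : β = beta q₀ x y := hβ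
  have hexp : q + 1 = (q - 2 * q₀ + 1) + 2 * q₀ := by
    have : 2 * q₀ ≤ q := hq ▸ Nat.mul_le_mul_left 2 (Nat.le_self_pow two_ne_zero q₀)
    omega
  rw [div_pow_add_div _ _ hβ0, div_pow_add_div _ _ hβ0, pow_q_mul_beta_add hq₀ hq h1,
    alpha_pow_q_mul_beta_add hq₀ hq h1]
  constructor
  · rw [div_pow, div_mul_div_comm, pow_mul' _ 2 q₀, sq]
    field_simp
  · rw [div_pow, ← h2, hexp, pow_add, mul_div_mul_right _ _ (pow_ne_zero _ hβ0)]

/-- The map `ξ(x, y, z) = (α/β, y/β, z/β)` with `α = y^{2q₀} + x^{2q₀+1}` and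
`β = x y^{2q₀} + α^{2q₀}` preserves the affine part of Skabelund's cyclic cover of the
Suzuki curve: `y^q + y = x^{q₀}(x^q + x)`, `x^q + x = z^{q-2q₀+1}`. -/
theorem stmt_12 {K : Type*} [Field K] [CharP K 2] (n q₀ q : ℕ)
    (hn : 1 ≤ n) (hq₀ : q₀ = 2 ^ n) (hq : q = 2 * q₀ ^ 2) (x y z : K)
    (h1 : y ^ q + y = x ^ q₀ * (x ^ q + x))
    (h2 : x ^ q + x = z ^ (q - 2 * q₀ + 1))
    (α β : K)
    (hα : α = y ^ (2 * q₀) + x ^ (2 * q₀ + 1))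
    (hβ : β = x * y ^ (2 * q₀) + α ^ (2 * q₀))
    (hβ0 : β ≠ 0) :
    (y / β) ^ q + y / β = (α / β) ^ q₀ * ((α / β) ^ q + α / β) ∧
      (α / β) ^ q + α / β = (z / β) ^ (q - 2 * q₀ + 1) :=
  stmt_12_general n q₀ q hq₀ hq x y z h1 h2 α β hα hβ hβ0
end

section
/- Let K be a field of characteristic 2, let q₀ = 2^n with n ≥ 1, and let q = 2q₀². Let a, b ∈ K satisfy a^q = a and b^q = b. If x, y, z ∈ K satisfy y^q + y = x^{q₀}(x^q + x) and x^q + x = z^{q−2q₀+1}, then the triple (x + a, y + a^{q₀}x + b, z) also satisfies these two equations. (That is, the group G₁ of order q² preserves the affine part of Skabelund's cyclic cover of the Suzuki curve.) -/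
/-!
In characteristic 2 the map `u ↦ u ^ q + u` is additive for every power `q` of 2 and kills the
field with `q` elements. Applying it to `y + a ^ q₀ * x + b` therefore gives
`y ^ q + y + a ^ q₀ * (x ^ q + x)`, since `a ^ q₀` also lies in that field, while the right-hand
side becomes `(x ^ q₀ + a ^ q₀) * (x ^ q + x)`; the extra terms agree, and the second equation
only sees `x ^ q + x`, which is unchanged.
-/

namespace Skabelund

variable {R : Type*} [CommRing R] [CharP R 2]

theorem pow_two_pow_add_self_add (m : ℕ) (u v : R) :
    (u + v) ^ 2 ^ m + (u + v) = (u ^ 2 ^ m + u) + (v ^ 2 ^ m + v) := by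
  rw [add_pow_char_pow]
  ring

theorem pow_two_pow_add_self_add_of_pow_eq {m : ℕ} (u : R) {v : R} (hv : v ^ 2 ^ m = v) :
    (u + v) ^ 2 ^ m + (u + v) = u ^ 2 ^ m + u := by
  rw [pow_two_pow_add_self_add, hv, CharTwo.add_self_eq_zero, add_zero]

theorem translate_first_eq {k l : ℕ} {a b x y : R} (ha : a ^ 2 ^ l = a) (hb : b ^ 2 ^ l = b)
    (h : y ^ 2 ^ l + y = x ^ 2 ^ k * (x ^ 2 ^ l + x)) :
    (y + a ^ 2 ^ k * x + b) ^ 2 ^ l + (y + a ^ 2 ^ k * x + b) =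
      (x + a) ^ 2 ^ k * ((x + a) ^ 2 ^ l + (x + a)) := by
  have hak : (a ^ 2 ^ k) ^ 2 ^ l = a ^ 2 ^ k := by rw [pow_right_comm, ha]
  rw [pow_two_pow_add_self_add_of_pow_eq _ hb, pow_two_pow_add_self_add, mul_pow, hak,
    pow_two_pow_add_self_add_of_pow_eq _ ha, add_pow_char_pow, h]
  ring

end Skabelund

theorem stmt_13_general {K : Type*} [Field K] [CharP K 2] (n q₀ q : ℕ)
    (hq₀ : q₀ = 2 ^ n) (hq : q = 2 * q₀ ^ 2)
    (a b : K) (ha : a ^ q = a) (hb : b ^ q = b) (x y z : K)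
    (h1 : y ^ q + y = x ^ q₀ * (x ^ q + x))
    (h2 : x ^ q + x = z ^ (q - 2 * q₀ + 1)) :
    (y + a ^ q₀ * x + b) ^ q + (y + a ^ q₀ * x + b) =
        (x + a) ^ q₀ * ((x + a) ^ q + (x + a)) ∧
      (x + a) ^ q + (x + a) = z ^ (q - 2 * q₀ + 1) := by
  obtain rfl : q = 2 ^ (2 * n + 1) := by rw [hq, hq₀]; ring
  subst hq₀
  exact ⟨Skabelund.translate_first_eq ha hb h1,
    (Skabelund.pow_two_pow_add_self_add_of_pow_eq x ha).trans h2⟩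

/-- The maps `(x, y, z) ↦ (x + a, y + a^{q₀} x + b, z)` with `a, b` in the field of `q`
elements preserve the affine part of Skabelund's cyclic cover of the Suzuki curve:
`y^q + y = x^{q₀}(x^q + x)`, `x^q + x = z^{q-2q₀+1}`. -/
theorem stmt_13 {K : Type*} [Field K] [CharP K 2] (n q₀ q : ℕ)
    (hn : 1 ≤ n) (hq₀ : q₀ = 2 ^ n) (hq : q = 2 * q₀ ^ 2)
    (a b : K) (ha : a ^ q = a) (hb : b ^ q = b) (x y z : K)
    (h1 : y ^ q + y = x ^ q₀ * (x ^ q + x))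
    (h2 : x ^ q + x = z ^ (q - 2 * q₀ + 1)) :
    (y + a ^ q₀ * x + b) ^ q + (y + a ^ q₀ * x + b) =
        (x + a) ^ q₀ * ((x + a) ^ q + (x + a)) ∧
      (x + a) ^ q + (x + a) = z ^ (q - 2 * q₀ + 1) :=
  stmt_13_general n q₀ q hq₀ hq a b ha hb x y z h1 h2
end
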